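/- In a Merkle tree over a list of leaves, if a leaf value together with a sibling-hash path recomputes to the root, and the hash function is injective (collision-free), then the leaf value equals the value stored at the corresponding position in the list. -/

import Mathlib

inductive MerkleTree (α : Type*) where
  | leaf (d : α)
  | node (l r : MerkleTree α)

inductive MerkleSide where
  | left
  | right

def MerkleTree.rootHash {α Digest : Type*} (h₀ : α → Digest)
    (h : Digest → Digest → Digest) : MerkleTree α → Digest
  | .leaf d => h₀ d
  | .node l r => h (l.rootHash h₀ h) (r.rootHash h₀ h)

/-- Verification of a leaf value against a path of (side, sibling digest) pairs,
ordered from the root down to the leaf. `(.left, d)` means the leaf lies in the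
left subtree and `d` is the digest of the right sibling. -/
def merkleVerify {α Digest : Type*} (h₀ : α → Digest)
    (h : Digest → Digest → Digest) (x : α) :
    List (MerkleSide × Digest) → Digest
  | [] => h₀ x
  | (.left, d) :: p => h (merkleVerify h₀ h x p) d
  | (.right, d) :: p => h d (merkleVerify h₀ h x p)

/-- Following a path (root-first) through a tree, reaching a leaf value. -/
def MerkleTree.follow {α Digest : Type*} :
    MerkleTree α → List (MerkleSide × Digest) → Option α
  | .leaf d, [] => some d
  | .node l _, (.left, _) :: p => l.follow p
  | .node _ r, (.right, _) :: p => r.follow p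
  | _, _ => none

namespace MerkleTree

variable {α Digest : Type*} {h₀ : α → Digest} {h : Digest → Digest → Digest}

theorem eq_leaf_of_rootHash_eq (hinj₀ : Function.Injective h₀)
    (hdisj : ∀ (a : α) (d₁ d₂ : Digest), h₀ a ≠ h d₁ d₂) {T : MerkleTree α} {x : α}
    (hT : T.rootHash h₀ h = h₀ x) : T = leaf x := by
  cases T with
  | leaf d => rw [hinj₀ hT]
  | node l r => exact absurd hT.symm (hdisj x _ _)

theorem exists_node_of_rootHash_eq
    (hinj : Function.Injective (fun p : Digest × Digest => h p.1 p.2))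
    (hdisj : ∀ (a : α) (d₁ d₂ : Digest), h₀ a ≠ h d₁ d₂) {T : MerkleTree α} {a b : Digest}
    (hT : T.rootHash h₀ h = h a b) :
    ∃ l r, T = node l r ∧ l.rootHash h₀ h = a ∧ r.rootHash h₀ h = b := by
  cases T with
  | leaf d => exact absurd hT (hdisj d a b)
  | node l r => exact ⟨l, r, rfl, Prod.ext_iff.mp (@hinj (_, _) (a, b) hT)⟩

end MerkleTree

theorem merkle_path_locates_leaf {α Digest : Type*}
    (h₀ : α → Digest) (h : Digest → Digest → Digest)
    (hinj₀ : Function.Injective h₀)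
    (hinj : Function.Injective (fun p : Digest × Digest => h p.1 p.2))
    (hdisj : ∀ (a : α) (d₁ d₂ : Digest), h₀ a ≠ h d₁ d₂)
    (T : MerkleTree α) (x : α) (p : List (MerkleSide × Digest))
    (hver : merkleVerify h₀ h x p = T.rootHash h₀ h) :
    T.follow p = some x := by
  induction p generalizing T with
  | nil => rw [MerkleTree.eq_leaf_of_rootHash_eq hinj₀ hdisj hver.symm]; rfl
  | cons step p ih =>
    obtain ⟨side, d⟩ := step
    cases side with
    | left =>
      obtain ⟨l, r, rfl, hl, -⟩ := MerkleTree.exists_node_of_rootHash_eq hinj hdisj hver.symm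
      exact ih l hl.symm
    | right =>
      obtain ⟨l, r, rfl, -, hr⟩ := MerkleTree.exists_node_of_rootHash_eq hinj hdisj hver.symm
      exact ih r hr.symm
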